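/- arXiv:2507.22541 — 3 statements merged into one kernel-verified Lean document; each statement's English description precedes it below -/
import Mathlib

section
/- Let V be a vector space with two coalgebra structures (Δ_x, ε_x) and (Δ_y, ε_y). If (Δ_y ⊗ Δ_y) ∘ Δ_x = (Δ_x ⊗ Δ_x) ∘ Δ_y (after the appropriate reordering of tensor factors so both sides land in V⊗V⊗V⊗V with matching leg ordering), then ε_x = ε_y. -/
open TensorProduct

private lemma pairL (V : Type*) [AddCommGroup V] [Module ℂ V]
    (Δ : V →ₗ[ℂ] V ⊗[ℂ] V) (ε f : V →ₗ[ℂ] ℂ)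
    (h : (TensorProduct.lid ℂ V).toLinearMap ∘ₗ ε.rTensor V ∘ₗ Δ = LinearMap.id) :
    (LinearMap.mul' ℂ ℂ ∘ₗ TensorProduct.map ε f) ∘ₗ Δ = f := by
  have h1 : LinearMap.mul' ℂ ℂ ∘ₗ TensorProduct.map ε f
      = f ∘ₗ (TensorProduct.lid ℂ V).toLinearMap ∘ₗ ε.rTensor V := by
    ext a b
    simp [LinearMap.rTensor, TensorProduct.smul_tmul', smul_eq_mul, mul_comm]
  ext v
  have hv := LinearMap.congr_fun h v
  have h1v := LinearMap.congr_fun h1 (Δ v)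
  simp only [LinearMap.comp_apply, LinearMap.id_apply] at hv h1v ⊢
  rw [h1v, hv]

private lemma pairR (V : Type*) [AddCommGroup V] [Module ℂ V]
    (Δ : V →ₗ[ℂ] V ⊗[ℂ] V) (ε f : V →ₗ[ℂ] ℂ)
    (h : (TensorProduct.rid ℂ V).toLinearMap ∘ₗ ε.lTensor V ∘ₗ Δ = LinearMap.id) :
    (LinearMap.mul' ℂ ℂ ∘ₗ TensorProduct.map f ε) ∘ₗ Δ = f := by
  have h1 : LinearMap.mul' ℂ ℂ ∘ₗ TensorProduct.map f ε
      = f ∘ₗ (TensorProduct.rid ℂ V).toLinearMap ∘ₗ ε.lTensor V := by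
    ext a b
    simp [LinearMap.lTensor, TensorProduct.smul_tmul', smul_eq_mul, mul_comm]
  ext v
  have hv := LinearMap.congr_fun h v
  have h1v := LinearMap.congr_fun h1 (Δ v)
  simp only [LinearMap.comp_apply, LinearMap.id_apply] at hv h1v ⊢
  rw [h1v, hv]

/-- If a vector space `V` carries two coalgebra structures `(Δx, εx)` and `(Δy, εy)` satisfying
the 2D compatibility condition `τ₂₃ ∘ (Δy ⊗ Δy) ∘ Δx = τ₂₃ ∘ (Δx ⊗ Δx) ∘ Δy`, then the two
counits coincide: `εx = εy`. -/
theorem counits_eq_of_compat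
    (V : Type*) [AddCommGroup V] [Module ℂ V]
    (Δx Δy : V →ₗ[ℂ] V ⊗[ℂ] V) (εx εy : V →ₗ[ℂ] ℂ)
    (hcoassoc_x : (TensorProduct.assoc ℂ V V V).toLinearMap ∘ₗ Δx.rTensor V ∘ₗ Δx
      = Δx.lTensor V ∘ₗ Δx)
    (hcoassoc_y : (TensorProduct.assoc ℂ V V V).toLinearMap ∘ₗ Δy.rTensor V ∘ₗ Δy
      = Δy.lTensor V ∘ₗ Δy)
    (hcounit_xl : (TensorProduct.lid ℂ V).toLinearMap ∘ₗ εx.rTensor V ∘ₗ Δx = LinearMap.id)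
    (hcounit_xr : (TensorProduct.rid ℂ V).toLinearMap ∘ₗ εx.lTensor V ∘ₗ Δx = LinearMap.id)
    (hcounit_yl : (TensorProduct.lid ℂ V).toLinearMap ∘ₗ εy.rTensor V ∘ₗ Δy = LinearMap.id)
    (hcounit_yr : (TensorProduct.rid ℂ V).toLinearMap ∘ₗ εy.lTensor V ∘ₗ Δy = LinearMap.id)
    (hcompat : (TensorProduct.tensorTensorTensorComm ℂ V V V V).toLinearMap
        ∘ₗ TensorProduct.map Δy Δy ∘ₗ Δx
      = (TensorProduct.tensorTensorTensorComm ℂ V V V V).toLinearMap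
        ∘ₗ TensorProduct.map Δx Δx ∘ₗ Δy) :
    εx = εy := by
  set m := LinearMap.mul' ℂ ℂ with hm
  set g : V ⊗[ℂ] V →ₗ[ℂ] ℂ := m ∘ₗ TensorProduct.map εy εx with hg
  set h : V ⊗[ℂ] V →ₗ[ℂ] ℂ := m ∘ₗ TensorProduct.map εx εy with hh
  set Φ : (V ⊗[ℂ] V) ⊗[ℂ] (V ⊗[ℂ] V) →ₗ[ℂ] ℂ := m ∘ₗ TensorProduct.map g h with hΦ
  have hττ : Φ ∘ₗ (TensorProduct.tensorTensorTensorComm ℂ V V V V).toLinearMap = Φ := by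
    ext a b c d
    simp only [hΦ, hg, hh, hm, LinearMap.comp_apply, LinearEquiv.coe_coe,
      TensorProduct.AlgebraTensorModule.curry_apply, TensorProduct.curry_apply,
      LinearMap.coe_restrictScalars, tensorTensorTensorComm_tmul, TensorProduct.map_tmul,
      LinearMap.mul'_apply]
    ring
  have key : Φ ∘ₗ ((TensorProduct.tensorTensorTensorComm ℂ V V V V).toLinearMap
        ∘ₗ TensorProduct.map Δy Δy ∘ₗ Δx)
      = Φ ∘ₗ ((TensorProduct.tensorTensorTensorComm ℂ V V V V).toLinearMap
        ∘ₗ TensorProduct.map Δx Δx ∘ₗ Δy) := by rw [hcompat]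
  simp only [← LinearMap.comp_assoc] at key
  rw [hττ] at key
  have hmapy : Φ ∘ₗ TensorProduct.map Δy Δy
      = m ∘ₗ TensorProduct.map (g ∘ₗ Δy) (h ∘ₗ Δy) := by
    rw [hΦ, LinearMap.comp_assoc, ← TensorProduct.map_comp]
  have hmapx : Φ ∘ₗ TensorProduct.map Δx Δx
      = m ∘ₗ TensorProduct.map (g ∘ₗ Δx) (h ∘ₗ Δx) := by
    rw [hΦ, LinearMap.comp_assoc, ← TensorProduct.map_comp]
  have hgy : g ∘ₗ Δy = εx := by
    rw [hg, LinearMap.comp_assoc]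
    exact pairL V Δy εy εx hcounit_yl
  have hhy : h ∘ₗ Δy = εx := by
    rw [hh, LinearMap.comp_assoc]
    exact pairR V Δy εy εx hcounit_yr
  have hgx : g ∘ₗ Δx = εy := by
    rw [hg, LinearMap.comp_assoc]
    exact pairR V Δx εx εy hcounit_xr
  have hhx : h ∘ₗ Δx = εy := by
    rw [hh, LinearMap.comp_assoc]
    exact pairL V Δx εx εy hcounit_xl
  rw [hmapy, hmapx, hgy, hhy, hgx, hhx] at key
  have left : (m ∘ₗ TensorProduct.map εx εx) ∘ₗ Δx = εx := pairL V Δx εx εx hcounit_xl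
  have right : (m ∘ₗ TensorProduct.map εy εy) ∘ₗ Δy = εy := pairL V Δy εy εy hcounit_yl
  rw [left, right] at key
  exact key
end

section
/- Let V be a vector space with two coalgebra structures (Δ_x, ε_x) and (Δ_y, ε_y) over ℂ. If (Δ_y ⊗ Δ_y) ∘ Δ_x = (Δ_x ⊗ Δ_x) ∘ Δ_y (with the leg-reordering convention τ_{23} applied to both sides), then Δ_x = Δ_y. -/
open TensorProduct

/-- If a vector space `V` carries two coalgebra structures `(Δx, εx)` and `(Δy, εy)` satisfying
the 2D compatibility condition `τ₂₃ ∘ (Δy ⊗ Δy) ∘ Δx = τ₂₃ ∘ (Δx ⊗ Δx) ∘ Δy`, then the two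
coproducts coincide: `Δx = Δy`. -/
theorem coproducts_eq_of_compat
    (V : Type*) [AddCommGroup V] [Module ℂ V]
    (Δx Δy : V →ₗ[ℂ] V ⊗[ℂ] V) (εx εy : V →ₗ[ℂ] ℂ)
    (hcoassoc_x : (TensorProduct.assoc ℂ V V V).toLinearMap ∘ₗ Δx.rTensor V ∘ₗ Δx
      = Δx.lTensor V ∘ₗ Δx)
    (hcoassoc_y : (TensorProduct.assoc ℂ V V V).toLinearMap ∘ₗ Δy.rTensor V ∘ₗ Δy
      = Δy.lTensor V ∘ₗ Δy)
    (hcounit_xl : (TensorProduct.lid ℂ V).toLinearMap ∘ₗ εx.rTensor V ∘ₗ Δx = LinearMap.id)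
    (hcounit_xr : (TensorProduct.rid ℂ V).toLinearMap ∘ₗ εx.lTensor V ∘ₗ Δx = LinearMap.id)
    (hcounit_yl : (TensorProduct.lid ℂ V).toLinearMap ∘ₗ εy.rTensor V ∘ₗ Δy = LinearMap.id)
    (hcounit_yr : (TensorProduct.rid ℂ V).toLinearMap ∘ₗ εy.lTensor V ∘ₗ Δy = LinearMap.id)
    (hcompat : (TensorProduct.tensorTensorTensorComm ℂ V V V V).toLinearMap
        ∘ₗ TensorProduct.map Δy Δy ∘ₗ Δx
      = (TensorProduct.tensorTensorTensorComm ℂ V V V V).toLinearMap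
        ∘ₗ TensorProduct.map Δx Δx ∘ₗ Δy) :
    Δx = Δy := by
  -- φx (a ⊗ b) = εx a • b,  φy (a ⊗ b) = εy a • b
  set φx : V ⊗[ℂ] V →ₗ[ℂ] V := (TensorProduct.lid ℂ V).toLinearMap ∘ₗ εx.rTensor V with hφxdef
  set φy : V ⊗[ℂ] V →ₗ[ℂ] V := (TensorProduct.lid ℂ V).toLinearMap ∘ₗ εy.rTensor V with hφydef
  set Φ : (V ⊗[ℂ] V) ⊗[ℂ] (V ⊗[ℂ] V) →ₗ[ℂ] V ⊗[ℂ] V := TensorProduct.map φx φy with hΦdef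
  have hφx : ∀ (a b : V), φx (a ⊗ₜ[ℂ] b) = εx a • b := by
    intro a b; simp [hφxdef]
  have hφy : ∀ (a b : V), φy (a ⊗ₜ[ℂ] b) = εy a • b := by
    intro a b; simp [hφydef]
  -- the scalar functional εxy (a ⊗ b) = εx a * εy b
  set εxy : V ⊗[ℂ] V →ₗ[ℂ] ℂ := εy ∘ₗ φx with hεxydef
  have hεxy : ∀ (a b : V), εxy (a ⊗ₜ[ℂ] b) = εx a * εy b := by
    intro a b; simp [hεxydef, hφx]
  set ψ : (V ⊗[ℂ] V) ⊗[ℂ] (V ⊗[ℂ] V) →ₗ[ℂ] V ⊗[ℂ] V :=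
    (TensorProduct.lid ℂ (V ⊗[ℂ] V)).toLinearMap ∘ₗ εxy.rTensor (V ⊗[ℂ] V) with hψdef
  have hψ : ∀ (a b c d : V), ψ ((a ⊗ₜ[ℂ] b) ⊗ₜ[ℂ] (c ⊗ₜ[ℂ] d)) = (εx a * εy b) • (c ⊗ₜ[ℂ] d) := by
    intro a b c d
    simp [hψdef, hεxy]
  -- Φ followed by the middle-swap collapses to ψ
  have h0 : Φ ∘ₗ (TensorProduct.tensorTensorTensorComm ℂ V V V V).toLinearMap = ψ := by
    apply TensorProduct.ext_fourfold'
    intro a b c d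
    simp only [LinearMap.comp_apply, LinearEquiv.coe_coe, tensorTensorTensorComm_tmul]
    rw [hψ]
    simp only [hΦdef, TensorProduct.map_tmul, hφx, hφy]
    simp [TensorProduct.smul_tmul', TensorProduct.tmul_smul, smul_smul, mul_comm]
  -- εxy kills one copy of Δy, leaving εx
  have hεxyΔy : εxy ∘ₗ Δy = εx := by
    have h1 : εxy = εx ∘ₗ (TensorProduct.rid ℂ V).toLinearMap ∘ₗ εy.lTensor V := by
      apply TensorProduct.ext'
      intro a b
      simp [hεxy, mul_comm]
    rw [h1]
    ext v
    have := LinearMap.congr_fun hcounit_yr v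
    simp only [LinearMap.comp_apply, LinearEquiv.coe_coe, LinearMap.id_apply] at this ⊢
    rw [this]
  -- εxy kills one copy of Δx, leaving εy
  have hεxyΔx : εxy ∘ₗ Δx = εy := by
    rw [hεxydef, LinearMap.comp_assoc]
    ext v
    have := LinearMap.congr_fun hcounit_xl v
    simp only [hφxdef, LinearMap.comp_apply, LinearEquiv.coe_coe, LinearMap.id_apply]
      at this ⊢
    rw [this]
  -- key computation: ψ ∘ (map f g) = g ∘ scalar action
  have hmain : ∀ (f g : V →ₗ[ℂ] V ⊗[ℂ] V) (ε : V →ₗ[ℂ] ℂ), εxy ∘ₗ f = ε →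
      ψ ∘ₗ TensorProduct.map f g = g ∘ₗ ((TensorProduct.lid ℂ V).toLinearMap ∘ₗ ε.rTensor V) := by
    intro f g ε hf
    apply TensorProduct.ext'
    intro a b
    simp only [LinearMap.comp_apply, TensorProduct.map_tmul, LinearEquiv.coe_coe,
      LinearMap.rTensor_tmul, TensorProduct.lid_tmul, map_smul]
    have : ψ (f a ⊗ₜ[ℂ] g b) = εxy (f a) • g b := by
      have hgen : ∀ (p q : V ⊗[ℂ] V), ψ (p ⊗ₜ[ℂ] q) = εxy p • q := by
        intro p q
        simp [hψdef]
      exact hgen (f a) (g b)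
    rw [this, ← hf]
    simp
  have hA : ψ ∘ₗ TensorProduct.map Δy Δy = Δy ∘ₗ φx := by
    rw [hmain Δy Δy εx hεxyΔy, hφxdef]
  have hB : ψ ∘ₗ TensorProduct.map Δx Δx = Δx ∘ₗ φy := by
    rw [hmain Δx Δx εy hεxyΔx, hφydef]
  -- now compose hcompat with Φ
  have key : Δy ∘ₗ (φx ∘ₗ Δx) = Δx ∘ₗ (φy ∘ₗ Δy) := by
    have := congrArg (fun m => Φ ∘ₗ m) hcompat
    simp only [← LinearMap.comp_assoc] at this
    rw [h0] at this
    rw [hA, hB] at this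
    simp only [LinearMap.comp_assoc] at this
    exact this
  have hx : φx ∘ₗ Δx = LinearMap.id := by
    rw [hφxdef, LinearMap.comp_assoc]; exact hcounit_xl
  have hy : φy ∘ₗ Δy = LinearMap.id := by
    rw [hφydef, LinearMap.comp_assoc]; exact hcounit_yl
  rw [hx, hy] at key
  simpa using key.symm
end

section
/- On (ℂ²)^{⊗4}, the 2×2 plaquette operator ⊞(S^±) = S^±⊗K⁺⊗K⁻⊗K⁻ + K⁻⊗S^±⊗K⁻⊗K⁻ + K⁺⊗K⁺⊗S^±⊗K⁺ + K⁺⊗K⁺⊗K⁻⊗S^± annihilates both |s⟩_q⊗|s⟩_q (singlets on sites (1,2) and (3,4)) and the crossed singlet state with singlets on pairs (3,2) and (4,1): ⊞(S^±)(α |s⟩_q^{(1,2)}|s⟩_q^{(3,4)} + β |s⟩_q^{(3,2)}|s⟩_q^{(4,1)}) = 0 for all α, β ∈ ℂ. -/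
open TensorProduct

noncomputable section

/-- Single-site state space `ℂ²`. -/
abbrev V2 : Type := Fin 2 → ℂ

/-- The three-site state space `(ℂ²)^{⊗3}`. -/
abbrev V3 : Type := V2 ⊗[ℂ] (V2 ⊗[ℂ] V2)

instance : AddCommGroup V3 := inferInstance
instance : Module ℂ V3 := inferInstance

/-- The four-site state space `(ℂ²)^{⊗4}`. -/
abbrev V4 : Type := V2 ⊗[ℂ] V3

instance : AddCommGroup V4 := inferInstance
instance : Module ℂ V4 := inferInstance

/-- Four 2×2 matrices acting as `A ⊗ B ⊗ C ⊗ D` on `(ℂ²)^{⊗4}`. -/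
def op4L (A B C D : Matrix (Fin 2) (Fin 2) ℂ) : V4 →ₗ[ℂ] V4 :=
  TensorProduct.map (Matrix.toLin' A)
    (TensorProduct.map (Matrix.toLin' B)
      (TensorProduct.map (Matrix.toLin' C) (Matrix.toLin' D)))

/-- The product basis vector `|abcd⟩` of `(ℂ²)^{⊗4}`. -/
def e4 (a b c d : Fin 2) : V4 :=
  Pi.single a 1 ⊗ₜ[ℂ] (Pi.single b 1 ⊗ₜ[ℂ] (Pi.single c 1 ⊗ₜ[ℂ] Pi.single d 1))

/-! The `q`-singlet `σ = s|01⟩ - s⁻¹|10⟩` (with `s = q^{1/2}`) is annihilated by the `q`-coproduct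
`Δ(S) = S ⊗ K⁺ + K⁻ ⊗ S` of every off-diagonal `S`, and is fixed by `K⁺ ⊗ K⁺` and `K⁻ ⊗ K⁻`.
Grouping the sites as `(1,2)(3,4)`, the plaquette operator is `Δ(S) ⊗ K⁻K⁻ + K⁺K⁺ ⊗ Δ(S)`, which
kills `σ ⊗ σ`. Grouping them as `(3,2)(4,1)`, it is
`(K⁻ ⊗ S) ⊗ K⁻K⁻ + (S ⊗ K⁺) ⊗ K⁺K⁺ + K⁻K⁺ ⊗ Δ(S)`; on `σ ⊗ σ` both `K⁻K⁻` and `K⁺K⁺` act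
trivially, so the first two terms combine to `Δ(S)σ ⊗ σ = 0`. -/

namespace TensorProduct

variable (R M₁ M₂ M₃ M₄ : Type*) [CommRing R] [AddCommGroup M₁] [AddCommGroup M₂] [AddCommGroup M₃]
  [AddCommGroup M₄] [Module R M₁] [Module R M₂] [Module R M₃] [Module R M₄]

def crossedPairsEquiv : (M₃ ⊗[R] M₂) ⊗[R] (M₄ ⊗[R] M₁) ≃ₗ[R] M₁ ⊗[R] (M₂ ⊗[R] (M₃ ⊗[R] M₄)) :=
  tensorTensorTensorComm R M₃ M₂ M₄ M₁ ≪≫ₗ TensorProduct.comm R _ _ ≪≫ₗ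
    congr (TensorProduct.comm R M₂ M₁) (LinearEquiv.refl R _) ≪≫ₗ
    TensorProduct.assoc R M₁ M₂ (M₃ ⊗[R] M₄)

@[simp]
theorem crossedPairsEquiv_tmul (x₁ : M₁) (x₂ : M₂) (x₃ : M₃) (x₄ : M₄) :
    crossedPairsEquiv R M₁ M₂ M₃ M₄ ((x₃ ⊗ₜ x₂) ⊗ₜ (x₄ ⊗ₜ x₁)) = x₁ ⊗ₜ (x₂ ⊗ₜ (x₃ ⊗ₜ x₄)) :=
  rfl

variable {R M₁ M₂ M₃ M₄} {N₁ N₂ N₃ N₄ : Type*} [AddCommGroup N₁] [AddCommGroup N₂]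
  [AddCommGroup N₃] [AddCommGroup N₄] [Module R N₁] [Module R N₂] [Module R N₃] [Module R N₄]

theorem map_map_map_comp_crossedPairsEquiv (f₁ : M₁ →ₗ[R] N₁) (f₂ : M₂ →ₗ[R] N₂)
    (f₃ : M₃ →ₗ[R] N₃) (f₄ : M₄ →ₗ[R] N₄) :
    map f₁ (map f₂ (map f₃ f₄)) ∘ₗ (crossedPairsEquiv R M₁ M₂ M₃ M₄).toLinearMap =
      (crossedPairsEquiv R N₁ N₂ N₃ N₄).toLinearMap ∘ₗ map (map f₃ f₂) (map f₄ f₁) :=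
  ext_fourfold' fun _ _ _ _ => rfl

theorem map_map_map_crossedPairsEquiv (f₁ : M₁ →ₗ[R] N₁) (f₂ : M₂ →ₗ[R] N₂)
    (f₃ : M₃ →ₗ[R] N₃) (f₄ : M₄ →ₗ[R] N₄) (x : (M₃ ⊗[R] M₂) ⊗[R] (M₄ ⊗[R] M₁)) :
    map f₁ (map f₂ (map f₃ f₄)) (crossedPairsEquiv R M₁ M₂ M₃ M₄ x) =
      crossedPairsEquiv R N₁ N₂ N₃ N₄ (map (map f₃ f₂) (map f₄ f₁) x) :=
  DFunLike.congr_fun (map_map_map_comp_crossedPairsEquiv f₁ f₂ f₃ f₄) x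

end TensorProduct

section TwoSite

open Matrix

abbrev Kplus (s : ℂ) : Matrix (Fin 2) (Fin 2) ℂ := diagonal ![s, s⁻¹]

abbrev Kminus (s : ℂ) : Matrix (Fin 2) (Fin 2) ℂ := diagonal ![s⁻¹, s]

def qSinglet (s : ℂ) : V2 ⊗[ℂ] V2 :=
  s • (Pi.single 0 1 ⊗ₜ Pi.single 1 1) - s⁻¹ • (Pi.single 1 1 ⊗ₜ Pi.single 0 1)

def qCoproduct (s : ℂ) (S : Matrix (Fin 2) (Fin 2) ℂ) : V2 ⊗[ℂ] V2 →ₗ[ℂ] V2 ⊗[ℂ] V2 :=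
  map (toLin' S) (toLin' (Kplus s)) + map (toLin' (Kminus s)) (toLin' S)

theorem toLin'_apply_single_one (M : Matrix (Fin 2) (Fin 2) ℂ) (j : Fin 2) :
    toLin' M (Pi.single j 1) = M 0 j • Pi.single 0 1 + M 1 j • Pi.single 1 1 := by
  ext i
  fin_cases i <;> simp

theorem map_diagonal_qSinglet {s u v u' v' : ℂ} (h₁ : u * v' = 1) (h₂ : v * u' = 1) :
    map (toLin' (diagonal ![u, v])) (toLin' (diagonal ![u', v'])) (qSinglet s) = qSinglet s := by
  simp only [qSinglet, map_sub, map_smul, map_tmul, toLin'_apply_single_one]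
  simp [← smul_tmul', tmul_smul, smul_smul, mul_comm, h₁, h₂]

theorem qCoproduct_qSinglet_eq_zero {s : ℂ} (hs : s ≠ 0) {S : Matrix (Fin 2) (Fin 2) ℂ}
    (h₀ : S 0 0 = 0) (h₁ : S 1 1 = 0) : qCoproduct s S (qSinglet s) = 0 := by
  simp only [qCoproduct, qSinglet, LinearMap.add_apply, map_sub, map_smul, map_tmul,
    toLin'_apply_single_one, add_tmul, tmul_add, ← smul_tmul', tmul_smul]
  match_scalars <;> simp [h₀, h₁] <;> field_simp <;> ring

end TwoSite

section Plaquette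

open Matrix

variable {s : ℂ}

def plaquette (s : ℂ) (S : Matrix (Fin 2) (Fin 2) ℂ) : V4 →ₗ[ℂ] V4 :=
  op4L S (Kplus s) (Kminus s) (Kminus s) + op4L (Kminus s) S (Kminus s) (Kminus s) +
    op4L (Kplus s) (Kplus s) S (Kplus s) + op4L (Kplus s) (Kplus s) (Kminus s) S

theorem assoc_qSinglet_tmul_qSinglet (hs : s ≠ 0) :
    TensorProduct.assoc ℂ V2 V2 (V2 ⊗[ℂ] V2) (qSinglet s ⊗ₜ qSinglet s) =
      s ^ 2 • e4 0 1 0 1 - e4 0 1 1 0 - e4 1 0 0 1 + s⁻¹ ^ 2 • e4 1 0 1 0 := by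
  simp only [qSinglet, e4, sub_tmul, tmul_sub, ← smul_tmul', tmul_smul, map_sub, map_smul,
    TensorProduct.assoc_tmul]
  match_scalars <;> field_simp

theorem crossedPairsEquiv_qSinglet_tmul_qSinglet (hs : s ≠ 0) :
    crossedPairsEquiv ℂ V2 V2 V2 V2 (qSinglet s ⊗ₜ qSinglet s) =
      s ^ 2 • e4 1 1 0 0 - e4 0 1 0 1 - e4 1 0 1 0 + s⁻¹ ^ 2 • e4 0 0 1 1 := by
  simp only [qSinglet, e4, sub_tmul, tmul_sub, ← smul_tmul', tmul_smul, map_sub, map_smul,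
    crossedPairsEquiv_tmul]
  match_scalars <;> field_simp

theorem plaquette_assoc_qSinglet_tmul_eq_zero (hs : s ≠ 0) {S : Matrix (Fin 2) (Fin 2) ℂ}
    (h₀ : S 0 0 = 0) (h₁ : S 1 1 = 0) :
    plaquette s S (TensorProduct.assoc ℂ V2 V2 (V2 ⊗[ℂ] V2) (qSinglet s ⊗ₜ qSinglet s)) = 0 := by
  have hΔ := qCoproduct_qSinglet_eq_zero hs h₀ h₁
  simp only [qCoproduct, LinearMap.add_apply] at hΔ
  simp only [plaquette, op4L, LinearMap.add_apply, map_map_assoc, map_tmul]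
  rw [← map_add, ← map_add, ← map_add, ← add_tmul, add_assoc, ← tmul_add, hΔ]
  simp

theorem plaquette_crossedPairsEquiv_qSinglet_tmul_eq_zero (hs : s ≠ 0)
    {S : Matrix (Fin 2) (Fin 2) ℂ} (h₀ : S 0 0 = 0) (h₁ : S 1 1 = 0) :
    plaquette s S (crossedPairsEquiv ℂ V2 V2 V2 V2 (qSinglet s ⊗ₜ qSinglet s)) = 0 := by
  have hΔ := qCoproduct_qSinglet_eq_zero hs h₀ h₁
  simp only [qCoproduct, LinearMap.add_apply] at hΔ
  have hKplus : map (toLin' (Kplus s)) (toLin' (Kplus s)) (qSinglet s) = qSinglet s :=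
    map_diagonal_qSinglet (mul_inv_cancel₀ hs) (inv_mul_cancel₀ hs)
  have hKminus : map (toLin' (Kminus s)) (toLin' (Kminus s)) (qSinglet s) = qSinglet s :=
    map_diagonal_qSinglet (inv_mul_cancel₀ hs) (mul_inv_cancel₀ hs)
  simp only [plaquette, op4L, LinearMap.add_apply, map_map_map_crossedPairsEquiv, map_tmul,
    hKplus, hKminus, eq_neg_of_add_eq_zero_right hΔ]
  rw [← map_add, ← map_add, ← map_add, tmul_neg, neg_tmul]
  convert map_zero (crossedPairsEquiv ℂ V2 V2 V2 V2) using 2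
  abel

end Plaquette

theorem plaquette_annihilates_singlets_general
    (q s : ℂ) (hq0 : q ≠ 0) (hs : s ^ 2 = q) :
    let Sp : Matrix (Fin 2) (Fin 2) ℂ := Matrix.single 0 1 1
    let Sm : Matrix (Fin 2) (Fin 2) ℂ := Matrix.single 1 0 1
    let Kp : Matrix (Fin 2) (Fin 2) ℂ := Matrix.diagonal ![s, s⁻¹]
    let Km : Matrix (Fin 2) (Fin 2) ℂ := Matrix.diagonal ![s⁻¹, s]
    -- ⊞(S) = S⊗K⁺⊗K⁻⊗K⁻ + K⁻⊗S⊗K⁻⊗K⁻ + K⁺⊗K⁺⊗S⊗K⁺ + K⁺⊗K⁺⊗K⁻⊗S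
    let plaq : Matrix (Fin 2) (Fin 2) ℂ → (V4 →ₗ[ℂ] V4) := fun S =>
      op4L S Kp Km Km + op4L Km S Km Km + op4L Kp Kp S Kp + op4L Kp Kp Km S
    -- |s⟩_q^{(1,2)} |s⟩_q^{(3,4)} = (s|01⟩ − s⁻¹|10⟩)₍₁₂₎ ⊗ (s|01⟩ − s⁻¹|10⟩)₍₃₄₎
    let state1 : V4 :=
      s ^ 2 • e4 0 1 0 1 - e4 0 1 1 0 - e4 1 0 0 1 + s⁻¹ ^ 2 • e4 1 0 1 0
    -- |s⟩_q^{(3,2)} |s⟩_q^{(4,1)} (crossed singlets)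
    let state2 : V4 :=
      s ^ 2 • e4 1 1 0 0 - e4 0 1 0 1 - e4 1 0 1 0 + s⁻¹ ^ 2 • e4 0 0 1 1
    ∀ α β : ℂ,
      plaq Sp (α • state1 + β • state2) = 0 ∧ plaq Sm (α • state1 + β • state2) = 0 := by
  intro Sp Sm Kp Km plaq state1 state2 α β
  have hs0 : s ≠ 0 := by
    rintro rfl
    exact hq0 (by simp [← hs])
  have hstate1 : state1 = TensorProduct.assoc ℂ V2 V2 (V2 ⊗[ℂ] V2) (qSinglet s ⊗ₜ qSinglet s) :=
    (assoc_qSinglet_tmul_qSinglet hs0).symm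
  have hstate2 : state2 = crossedPairsEquiv ℂ V2 V2 V2 V2 (qSinglet s ⊗ₜ qSinglet s) :=
    (crossedPairsEquiv_qSinglet_tmul_qSinglet hs0).symm
  have annihilates : ∀ S : Matrix (Fin 2) (Fin 2) ℂ, S 0 0 = 0 → S 1 1 = 0 →
      plaq S (α • state1 + β • state2) = 0 := fun S h₀ h₁ => by
    change plaquette s S (α • state1 + β • state2) = 0
    rw [map_add, map_smul, map_smul, hstate1, hstate2,
      plaquette_assoc_qSinglet_tmul_eq_zero hs0 h₀ h₁,
      plaquette_crossedPairsEquiv_qSinglet_tmul_eq_zero hs0 h₀ h₁, smul_zero, smul_zero, add_zero]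
  exact ⟨annihilates Sp (by simp [Sp]) (by simp [Sp]),
    annihilates Sm (by simp [Sm]) (by simp [Sm])⟩

/-- The 2×2 plaquette operator `⊞(S^±)` annihilates every linear combination of the
horizontal two-singlet state `|s⟩_q^{(1,2)}|s⟩_q^{(3,4)}` and the crossed two-singlet
state `|s⟩_q^{(3,2)}|s⟩_q^{(4,1)}` (with `s = q^{1/2}`). -/
theorem plaquette_annihilates_singlets
    (q s : ℂ) (hq0 : q ≠ 0) (hq2 : q ^ 2 ≠ 1) (hs : s ^ 2 = q) :
    let Sp : Matrix (Fin 2) (Fin 2) ℂ := Matrix.single 0 1 1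
    let Sm : Matrix (Fin 2) (Fin 2) ℂ := Matrix.single 1 0 1
    let Kp : Matrix (Fin 2) (Fin 2) ℂ := Matrix.diagonal ![s, s⁻¹]
    let Km : Matrix (Fin 2) (Fin 2) ℂ := Matrix.diagonal ![s⁻¹, s]
    -- ⊞(S) = S⊗K⁺⊗K⁻⊗K⁻ + K⁻⊗S⊗K⁻⊗K⁻ + K⁺⊗K⁺⊗S⊗K⁺ + K⁺⊗K⁺⊗K⁻⊗S
    let plaq : Matrix (Fin 2) (Fin 2) ℂ → (V4 →ₗ[ℂ] V4) := fun S =>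
      op4L S Kp Km Km + op4L Km S Km Km + op4L Kp Kp S Kp + op4L Kp Kp Km S
    -- |s⟩_q^{(1,2)} |s⟩_q^{(3,4)} = (s|01⟩ − s⁻¹|10⟩)₍₁₂₎ ⊗ (s|01⟩ − s⁻¹|10⟩)₍₃₄₎
    let state1 : V4 :=
      s ^ 2 • e4 0 1 0 1 - e4 0 1 1 0 - e4 1 0 0 1 + s⁻¹ ^ 2 • e4 1 0 1 0
    -- |s⟩_q^{(3,2)} |s⟩_q^{(4,1)} (crossed singlets)
    let state2 : V4 :=
      s ^ 2 • e4 1 1 0 0 - e4 0 1 0 1 - e4 1 0 1 0 + s⁻¹ ^ 2 • e4 0 0 1 1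
    ∀ α β : ℂ,
      plaq Sp (α • state1 + β • state2) = 0 ∧ plaq Sm (α • state1 + β • state2) = 0 :=
  plaquette_annihilates_singlets_general q s hq0 hs
end
end
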